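/- arXiv:2308.15257 — 3 statements merged into one kernel-verified Lean document; each statement's English description precedes it below -/
import Mathlib

section
/- Let S : [0,∞) → L(H) be a strongly continuous semigroup of bounded operators on a Hilbert space H such that ‖S(t)‖ ≤ C for all t ≥ 0 and ∫₀^∞ ‖S(t)y₀‖² dt ≤ C‖y₀‖² for all y₀ ∈ H, for some constant C ≥ 1. Then ‖S(t)‖ ≤ C²/√t for every t > 0. -/
open MeasureTheory Set

/-! Writing `S t = S s ∘ S (t - s)` gives `‖S t y‖ ≤ C ‖S (t - s) y‖` for `0 ≤ s ≤ t`. Squaring and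
integrating over `s ∈ [0, t]` yields `t ‖S t y‖² ≤ C² ∫₀^∞ ‖S s y‖² ds ≤ C³ ‖y‖² ≤ C⁴ ‖y‖²`. -/

theorem mul_le_intervalIntegral_of_le_comp_sub {f : ℝ → ℝ} {a t : ℝ} (ht : 0 ≤ t)
    (hf : IntervalIntegrable f volume 0 t) (h : ∀ s ∈ Icc 0 t, a ≤ f (t - s)) :
    t * a ≤ ∫ s in 0..t, f s := by
  have hf' : IntervalIntegrable (fun s => f (t - s)) volume 0 t := by
    simpa using hf.symm.comp_sub_left t
  calc t * a = ∫ _ in 0..t, a := by simp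
    _ ≤ ∫ s in 0..t, f (t - s) := intervalIntegral.integral_mono_on ht (by simp) hf' h
    _ = ∫ s in 0..t, f s := by simp [intervalIntegral.integral_comp_sub_left]

theorem intervalIntegral_le_integral_Ioi {f : ℝ → ℝ} {a b : ℝ} (hab : a ≤ b)
    (hf : IntegrableOn f (Ioi a)) (hf0 : ∀ s ∈ Ioi a, 0 ≤ f s) :
    ∫ s in a..b, f s ≤ ∫ s in Ioi a, f s := by
  rw [intervalIntegral.integral_of_le hab]
  exact setIntegral_mono_set hf ((ae_restrict_iff' measurableSet_Ioi).2 (.of_forall hf0))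
    Ioc_subset_Ioi_self.eventuallyLE

theorem le_div_sqrt_mul_of_mul_sq_le {x y b t : ℝ} (ht : 0 < t) (hb : 0 ≤ b) (hy : 0 ≤ y)
    (h : t * x ^ 2 ≤ b ^ 2 * y ^ 2) : x ≤ b / Real.sqrt t * y := by
  have hst : 0 < Real.sqrt t := Real.sqrt_pos.2 ht
  rw [div_mul_eq_mul_div, le_div_iff₀ hst]
  refine le_of_sq_le_sq ?_ (by positivity)
  rw [mul_pow, Real.sq_sqrt ht.le]
  linarith

section Semigroup

variable {𝕜 E : Type*} [NontriviallyNormedField 𝕜] [NormedAddCommGroup E] [NormedSpace 𝕜 E]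
  {S : ℝ → E →L[𝕜] E} {C : ℝ}

theorem norm_semigroup_apply_le_mul_norm_apply_sub
    (hsg : ∀ s t : ℝ, 0 ≤ s → 0 ≤ t → S (s + t) = (S s).comp (S t))
    (hbd : ∀ t : ℝ, 0 ≤ t → ‖S t‖ ≤ C) {s t : ℝ} (hs : 0 ≤ s) (hst : s ≤ t) (y : E) :
    ‖S t y‖ ≤ C * ‖S (t - s) y‖ := by
  have hdecomp : S t = (S s).comp (S (t - s)) := by
    simpa using hsg s (t - s) hs (sub_nonneg.2 hst)
  calc ‖S t y‖ ≤ ‖S s‖ * ‖S (t - s) y‖ := by rw [hdecomp]; exact (S s).le_opNorm _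
    _ ≤ C * ‖S (t - s) y‖ := by gcongr; exact hbd s hs

theorem mul_sq_norm_semigroup_apply_le
    (hsg : ∀ s t : ℝ, 0 ≤ s → 0 ≤ t → S (s + t) = (S s).comp (S t))
    (hbd : ∀ t : ℝ, 0 ≤ t → ‖S t‖ ≤ C) {y : E}
    (hint : IntegrableOn (fun t => ‖S t y‖ ^ 2) (Ioi 0)) {t : ℝ} (ht : 0 ≤ t) :
    t * ‖S t y‖ ^ 2 ≤ C ^ 2 * ∫ s in Ioi 0, ‖S s y‖ ^ 2 := by
  have hint' : IntervalIntegrable (fun s => C ^ 2 * ‖S s y‖ ^ 2) volume 0 t :=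
    ((intervalIntegrable_iff_integrableOn_Ioc_of_le ht).2
      (hint.mono_set Ioc_subset_Ioi_self)).const_mul _
  calc t * ‖S t y‖ ^ 2 ≤ ∫ s in 0..t, C ^ 2 * ‖S s y‖ ^ 2 := by
        refine mul_le_intervalIntegral_of_le_comp_sub ht hint' fun s hs => ?_
        rw [← mul_pow]
        gcongr
        exact norm_semigroup_apply_le_mul_norm_apply_sub hsg hbd hs.1 hs.2 y
    _ = C ^ 2 * ∫ s in 0..t, ‖S s y‖ ^ 2 := intervalIntegral.integral_const_mul _ _
    _ ≤ C ^ 2 * ∫ s in Ioi 0, ‖S s y‖ ^ 2 := by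
        gcongr
        exact intervalIntegral_le_integral_Ioi ht hint fun s _ => by positivity

end Semigroup

theorem semigroup_norm_decay_general
    {H : Type*} [NormedAddCommGroup H] [InnerProductSpace ℝ H]
    (S : ℝ → H →L[ℝ] H) (C : ℝ) (hC : 1 ≤ C)
    (hsg : ∀ s t : ℝ, 0 ≤ s → 0 ≤ t → S (s + t) = (S s).comp (S t))
    (hbd : ∀ t : ℝ, 0 ≤ t → ‖S t‖ ≤ C)
    (hint : ∀ y₀ : H, IntegrableOn (fun t => ‖S t y₀‖ ^ 2) (Ioi (0 : ℝ)))
    (hL2 : ∀ y₀ : H, ∫ t in Ioi (0 : ℝ), ‖S t y₀‖ ^ 2 ≤ C * ‖y₀‖ ^ 2) :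
    ∀ t : ℝ, 0 < t → ‖S t‖ ≤ C ^ 2 / Real.sqrt t := by
  intro t ht
  have hC0 : 0 ≤ C := zero_le_one.trans hC
  refine ContinuousLinearMap.opNorm_le_bound _ (by positivity) fun y => ?_
  refine le_div_sqrt_mul_of_mul_sq_le ht (by positivity) (norm_nonneg y) ?_
  calc t * ‖S t y‖ ^ 2 ≤ C ^ 2 * (C * ‖y‖ ^ 2) := by
        grw [mul_sq_norm_semigroup_apply_le hsg hbd (hint y) ht.le, hL2 y]
    _ = C ^ 3 * ‖y‖ ^ 2 := by ring
    _ ≤ (C ^ 2) ^ 2 * ‖y‖ ^ 2 := by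
        rw [← pow_mul]
        gcongr
        norm_num

/-- a strongly continuous, uniformly bounded semigroup whose orbits are
uniformly square-integrable satisfies `‖S t‖ ≤ C²/√t` for `t > 0`. -/
theorem semigroup_norm_decay
    {H : Type*} [NormedAddCommGroup H] [InnerProductSpace ℝ H] [CompleteSpace H]
    (S : ℝ → H →L[ℝ] H) (C : ℝ) (hC : 1 ≤ C)
    (hS0 : S 0 = ContinuousLinearMap.id ℝ H)
    (hsg : ∀ s t : ℝ, 0 ≤ s → 0 ≤ t → S (s + t) = (S s).comp (S t))
    (hcont : ∀ y : H, Continuous fun t => S t y)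
    (hbd : ∀ t : ℝ, 0 ≤ t → ‖S t‖ ≤ C)
    (hint : ∀ y₀ : H, IntegrableOn (fun t => ‖S t y₀‖ ^ 2) (Ioi (0 : ℝ)))
    (hL2 : ∀ y₀ : H, ∫ t in Ioi (0 : ℝ), ‖S t y₀‖ ^ 2 ≤ C * ‖y₀‖ ^ 2) :
    ∀ t : ℝ, 0 < t → ‖S t‖ ≤ C ^ 2 / Real.sqrt t :=
  semigroup_norm_decay_general S C hC hsg hbd hint hL2
end

section
/- Let μ > 0 and C > 0, and let y : [0,T] → H satisfy ‖y(t) - ȳ‖ ≤ C(e^{-μt} + e^{-μ(T-t)}) for all t ∈ (0,T), where ȳ ∈ H is fixed (H a normed space) and y is integrable. Then ‖(1/T)∫₀^T y(t) dt − ȳ‖ ≤ 2C(1 − e^{-μT})/(μT). -/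
open MeasureTheory intervalIntegral Real Set

/-! Subtracting the turnpike inside the integral reduces the claim to bounding
`‖∫₀ᵀ (y - ȳ)‖` by the integral of the exponential profile, which equals `2C(1 - e^{-μT})/μ`. -/

theorem integral_exp_const_mul {c : ℝ} (hc : c ≠ 0) (a b : ℝ) :
    ∫ x in a..b, exp (c * x) = (exp (c * b) - exp (c * a)) / c := by
  rw [intervalIntegral.integral_comp_mul_left (fun x => exp x) hc, integral_exp, smul_eq_mul,
    inv_mul_eq_div]

theorem integral_exp_neg_mul_add_exp_neg_mul_sub {μ : ℝ} (hμ : μ ≠ 0) (T : ℝ) :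
    ∫ t in (0 : ℝ)..T, (exp (-μ * t) + exp (-μ * (T - t))) = 2 * (1 - exp (-μ * T)) / μ := by
  have hμ' : -μ ≠ 0 := neg_ne_zero.mpr hμ
  have h_reflect : ∫ t in (0 : ℝ)..T, exp (-μ * (T - t)) = ∫ t in (0 : ℝ)..T, exp (-μ * t) := by
    simpa only [sub_zero, sub_self] using
      intervalIntegral.integral_comp_sub_left (fun s => exp (-μ * s)) (a := 0) (b := T) T
  rw [intervalIntegral.integral_add
    (Continuous.intervalIntegrable (by fun_prop) _ _)
    (Continuous.intervalIntegrable (by fun_prop) _ _), h_reflect,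
    integral_exp_const_mul hμ', mul_zero, exp_zero]
  field_simp
  ring

theorem norm_integral_le_of_norm_le_Ioo {E : Type*} [NormedAddCommGroup E] [NormedSpace ℝ E]
    {ν : Measure ℝ} [NullSingletonClass ν] {f : ℝ → E} {g : ℝ → ℝ} {a b : ℝ} (hab : a ≤ b)
    (h : ∀ t ∈ Ioo a b, ‖f t‖ ≤ g t) (hg : IntervalIntegrable g ν a b) :
    ‖∫ t in a..b, f t ∂ν‖ ≤ ∫ t in a..b, g t ∂ν := by
  refine intervalIntegral.norm_integral_le_of_norm_le hab ?_ hg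
  filter_upwards [(Ioo_ae_eq_Ioc (μ := ν) (a := a) (b := b)).mem_iff] with t ht hIoc
  exact h t (ht.mpr hIoc)

theorem smul_integral_sub_const {E : Type*} [NormedAddCommGroup E] [NormedSpace ℝ E]
    [CompleteSpace E] {f : ℝ → E} {a b : ℝ} (hab : a ≠ b) (hf : IntervalIntegrable f volume a b) (c : E) :
    (b - a)⁻¹ • (∫ t in a..b, f t) - c = (b - a)⁻¹ • ∫ t in a..b, (f t - c) := by
  rw [intervalIntegral.integral_sub hf intervalIntegrable_const, intervalIntegral.integral_const,
    smul_sub, smul_smul, inv_mul_cancel₀ (sub_ne_zero.mpr hab.symm), one_smul]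

theorem integral_turnpike_general
    {H : Type*} [NormedAddCommGroup H] [NormedSpace ℝ H] [CompleteSpace H]
    (T C μ : ℝ) (hT : 0 < T) (hμ : 0 < μ)
    (y : ℝ → H) (ybar : H)
    (hy_int : IntervalIntegrable y volume 0 T)
    (hturnpike : ∀ t ∈ Set.Ioo (0 : ℝ) T,
      ‖y t - ybar‖ ≤ C * (Real.exp (-μ * t) + Real.exp (-μ * (T - t)))) :
    ‖(1 / T) • (∫ t in (0 : ℝ)..T, y t) - ybar‖
      ≤ 2 * C * (1 - Real.exp (-μ * T)) / (μ * T) := by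
  have h_avg : (1 / T) • (∫ t in (0 : ℝ)..T, y t) - ybar
      = (T - 0)⁻¹ • ∫ t in (0 : ℝ)..T, (y t - ybar) := by
    rw [← smul_integral_sub_const hT.ne hy_int, sub_zero, one_div]
  calc ‖(1 / T) • (∫ t in (0 : ℝ)..T, y t) - ybar‖
      = T⁻¹ * ‖∫ t in (0 : ℝ)..T, (y t - ybar)‖ := by
        rw [h_avg, sub_zero, norm_smul, Real.norm_of_nonneg (inv_nonneg.mpr hT.le)]
    _ ≤ T⁻¹ * ∫ t in (0 : ℝ)..T, C * (exp (-μ * t) + exp (-μ * (T - t))) := by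
        gcongr
        exact norm_integral_le_of_norm_le_Ioo hT.le hturnpike
          (Continuous.intervalIntegrable (by fun_prop) _ _)
    _ = 2 * C * (1 - Real.exp (-μ * T)) / (μ * T) := by
        rw [intervalIntegral.integral_const_mul,
          integral_exp_neg_mul_add_exp_neg_mul_sub hμ.ne']
        field_simp

/-- uniform integral turnpike property — the time-average of an
exponentially turnpiked trajectory is within `2C(1-e^{-μT})/(μT)` of the turnpike. -/
theorem integral_turnpike
    {H : Type*} [NormedAddCommGroup H] [NormedSpace ℝ H] [CompleteSpace H]
    (T C μ : ℝ) (hT : 0 < T) (hC : 0 ≤ C) (hμ : 0 < μ)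
    (y : ℝ → H) (ybar : H)
    (hy_int : IntervalIntegrable y volume 0 T)
    (hturnpike : ∀ t ∈ Set.Ioo (0 : ℝ) T,
      ‖y t - ybar‖ ≤ C * (Real.exp (-μ * t) + Real.exp (-μ * (T - t)))) :
    ‖(1 / T) • (∫ t in (0 : ℝ)..T, y t) - ybar‖
      ≤ 2 * C * (1 - Real.exp (-μ * T)) / (μ * T) :=
  integral_turnpike_general T C μ hT hμ y ybar hy_int hturnpike
end

section
/- Let μ > 0, C₂ ≥ 1, C₀ ≥ 0 and let z : [0,T] → H (H a Banach space) be continuous and satisfy ‖z(t)‖ ≤ C₂ R e^{-μt} + C₂ C₃ e^{-μ(T-t)} + C₀ C₂ ∫₀^t e^{-μ(t-s)} e^{-μ(T-s)} ‖z(s)‖ ds for all t ∈ [0,T], where R, C₃ ≥ 0. Then there is a constant C₄ depending only on C₀, C₂, C₃, μ (not on T, R) with ‖z(t)‖ ≤ C₄ (R e^{-μt} + C₃ e^{-μ(T-t)}) for all t ∈ [0,T]. -/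
/-!
Multiplying the inequality by `e^{μt}` turns it into a Gronwall inequality for
`w(t) = e^{μt} ‖z(t)‖` with nondecreasing forcing `C₂ R + C₂ C₃ e^{μ(2t - T)}` and kernel
`C₀ C₂ e^{-μ(T - s)}`. The kernel has total mass at most `C₀ C₂ / μ` on `[0, T]` whatever `T` is,
so Gronwall's lemma costs only the factor `exp (C₀ C₂ / μ)`, and dividing back by `e^{μt}` gives
the estimate with `C₄ = C₂ exp (C₀ C₂ / μ)`.
-/

open Set Real intervalIntegral

theorem hasDerivAt_integral_of_continuousOn {E : Type*} [NormedAddCommGroup E]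
    [NormedSpace ℝ E] [CompleteSpace E] {f : ℝ → E} {a b t : ℝ}
    (hf : ContinuousOn f (Icc a b)) (ht : t ∈ Ioo a b) :
    HasDerivAt (fun x => ∫ s in a..x, f s) (f t) t :=
  integral_hasDerivAt_right
    ((hf.mono (Icc_subset_Icc_right ht.2.le)).intervalIntegrable_of_Icc ht.1.le)
    ((hf.mono Ioo_subset_Icc_self).stronglyMeasurableAtFilter isOpen_Ioo t ht)
    (hf.continuousAt (Icc_mem_nhds ht.1 ht.2))

theorem continuousOn_primitive_Icc {E : Type*} [NormedAddCommGroup E] [NormedSpace ℝ E]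
    {f : ℝ → E} {a b : ℝ} (hab : a ≤ b)
    (hf : ContinuousOn f (Icc a b)) :
    ContinuousOn (fun x => ∫ s in a..x, f s) (Icc a b) := by
  rw [← uIcc_of_le hab] at hf ⊢
  exact continuousOn_primitive_interval hf.integrableOn_uIcc

section Gronwall

variable {b w : ℝ → ℝ} {t₀ t₁ : ℝ}

theorem add_integral_le_mul_exp_integral {c : ℝ} (h01 : t₀ ≤ t₁)
    (hb : ContinuousOn b (Icc t₀ t₁)) (hb₀ : ∀ s ∈ Icc t₀ t₁, 0 ≤ b s)
    (hw : ContinuousOn w (Icc t₀ t₁))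
    (h : ∀ t ∈ Icc t₀ t₁, w t ≤ c + ∫ s in t₀..t, b s * w s) :
    c + ∫ s in t₀..t₁, b s * w s ≤ c * exp (∫ s in t₀..t₁, b s) := by
  set u := fun t => ∫ s in t₀..t, b s * w s
  set B := fun t => ∫ s in t₀..t, b s
  have hbw : ContinuousOn (fun s => b s * w s) (Icc t₀ t₁) := hb.mul hw
  -- its derivative is `(u' - b (c + u)) e^{-B}`, and `u' = b w ≤ b (c + u)`
  have hF : AntitoneOn (fun t => (c + u t) * exp (-B t)) (Icc t₀ t₁) := by
    refine antitoneOn_of_hasDerivWithinAt_nonpos (convex_Icc t₀ t₁)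
      ((continuousOn_const.add (continuousOn_primitive_Icc h01 hbw)).mul
        (continuousOn_primitive_Icc h01 hb).neg.rexp) (fun t ht => ?_) (fun t ht => ?_)
      (f' := fun t => b t * w t * exp (-B t) + (c + u t) * (exp (-B t) * -b t))
    · rw [interior_Icc] at ht
      exact (((hasDerivAt_integral_of_continuousOn hbw ht).const_add c).mul
        (hasDerivAt_integral_of_continuousOn hb ht).neg.exp).hasDerivWithinAt
    · rw [interior_Icc] at ht
      have hwt := h t (Ioo_subset_Icc_self ht)
      have hbt := hb₀ t (Ioo_subset_Icc_self ht)
      have : b t * (w t - (c + u t)) ≤ 0 := mul_nonpos_of_nonneg_of_nonpos hbt (by linarith)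
      nlinarith [exp_pos (-B t)]
  have hFt := hF (left_mem_Icc.2 h01) (right_mem_Icc.2 h01) h01
  simp only [u, B, integral_same, add_zero, neg_zero, exp_zero, mul_one] at hFt
  rwa [exp_neg, ← div_eq_mul_inv, div_le_iff₀ (exp_pos _)] at hFt

theorem le_mul_exp_integral_of_le_add_integral {a : ℝ → ℝ}
    (hb : ContinuousOn b (Icc t₀ t₁)) (hb₀ : ∀ s ∈ Icc t₀ t₁, 0 ≤ b s)
    (hw : ContinuousOn w (Icc t₀ t₁)) (ha : MonotoneOn a (Icc t₀ t₁))
    (h : ∀ t ∈ Icc t₀ t₁, w t ≤ a t + ∫ s in t₀..t, b s * w s) {t : ℝ} (ht : t ∈ Icc t₀ t₁) :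
    w t ≤ a t * exp (∫ s in t₀..t, b s) := by
  have hsub : Icc t₀ t ⊆ Icc t₀ t₁ := Icc_subset_Icc_right ht.2
  refine (h t ht).trans (add_integral_le_mul_exp_integral ht.1 (hb.mono hsub)
    (fun s hs => hb₀ s (hsub hs)) (hw.mono hsub) fun s hs => ?_)
  grw [h s (hsub hs), ha (hsub hs) ht hs.2]

end Gronwall

theorem integral_exp_neg_mul_sub_le_inv {μ T a t : ℝ} (hμ : 0 < μ) (ht : t ≤ T) :
    ∫ s in a..t, exp (-μ * (T - s)) ≤ μ⁻¹ := by
  have hlin : ∀ s, -μ * (T - s) = μ * s + -(μ * T) := fun s => by ring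
  simp_rw [hlin]
  rw [integral_comp_mul_add exp hμ.ne', integral_exp, smul_eq_mul, ← hlin, ← hlin]
  have hμ' : 0 ≤ μ⁻¹ := inv_nonneg.2 hμ.le
  calc μ⁻¹ * (exp (-μ * (T - t)) - exp (-μ * (T - a))) ≤ μ⁻¹ * exp (-μ * (T - t)) :=
        mul_le_mul_of_nonneg_left (sub_le_self _ (exp_pos _).le) hμ'
    _ ≤ μ⁻¹ := mul_le_of_le_one_right hμ' (exp_le_one_iff.2 (by nlinarith))

theorem exp_mul_exp_of_add_eq {x y x' : ℝ} (h : x + y = x') : exp x * exp y = exp x' := by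
  rw [← exp_add, h]

theorem exp_mul_norm_le_add_integral {H : Type*} [NormedAddCommGroup H] {z : ℝ → H}
    {μ C₀ C₂ C₃ R T t : ℝ}
    (h : ‖z t‖ ≤ C₂ * R * exp (-μ * t) + C₂ * C₃ * exp (-μ * (T - t)) +
      C₀ * C₂ * ∫ s in (0 : ℝ)..t, exp (-μ * (t - s)) * exp (-μ * (T - s)) * ‖z s‖) :
    exp (μ * t) * ‖z t‖ ≤ C₂ * R + C₂ * C₃ * exp (μ * (2 * t - T)) +
      ∫ s in (0 : ℝ)..t, C₀ * C₂ * exp (-μ * (T - s)) * (exp (μ * s) * ‖z s‖) := by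
  have hkernel : ∫ s in (0 : ℝ)..t, C₀ * C₂ * exp (-μ * (T - s)) * (exp (μ * s) * ‖z s‖) =
      exp (μ * t) * (C₀ * C₂ *
        ∫ s in (0 : ℝ)..t, exp (-μ * (t - s)) * exp (-μ * (T - s)) * ‖z s‖) := by
    rw [← integral_const_mul, ← integral_const_mul]
    refine integral_congr fun s _ => ?_
    linear_combination -(C₀ * C₂ * exp (-μ * (T - s)) * ‖z s‖) *
      exp_mul_exp_of_add_eq (x := μ * t) (y := -μ * (t - s)) (x' := μ * s) (by ring)
  calc exp (μ * t) * ‖z t‖ ≤ exp (μ * t) * (C₂ * R * exp (-μ * t) +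
        C₂ * C₃ * exp (-μ * (T - t)) +
        C₀ * C₂ * ∫ s in (0 : ℝ)..t, exp (-μ * (t - s)) * exp (-μ * (T - s)) * ‖z s‖) :=
        mul_le_mul_of_nonneg_left h (exp_pos _).le
    _ = _ := by
        rw [hkernel]
        linear_combination
          C₂ * R * exp_mul_exp_of_add_eq (x := μ * t) (y := -μ * t) (x' := 0) (by ring) +
          C₂ * C₃ * exp_mul_exp_of_add_eq (x := μ * t) (y := -μ * (T - t))
            (x' := μ * (2 * t - T)) (by ring) + C₂ * R * exp_zero

theorem turnpike_closing_estimate_general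
    {H : Type*} [NormedAddCommGroup H]
    (μ C₀ C₂ C₃ : ℝ) (hμ : 0 < μ) (hC₂ : 1 ≤ C₂) (hC₀ : 0 ≤ C₀) (hC₃ : 0 ≤ C₃) :
    ∃ C₄ : ℝ, 0 < C₄ ∧
      ∀ (T R : ℝ), 0 ≤ T → 0 ≤ R →
      ∀ z : ℝ → H, ContinuousOn z (Set.Icc 0 T) →
      (∀ t ∈ Set.Icc (0 : ℝ) T,
        ‖z t‖ ≤ C₂ * R * Real.exp (-μ * t) + C₂ * C₃ * Real.exp (-μ * (T - t)) +
          C₀ * C₂ * ∫ s in (0 : ℝ)..t,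
            Real.exp (-μ * (t - s)) * Real.exp (-μ * (T - s)) * ‖z s‖) →
      ∀ t ∈ Set.Icc (0 : ℝ) T,
        ‖z t‖ ≤ C₄ * (R * Real.exp (-μ * t) + C₃ * Real.exp (-μ * (T - t))) := by
  refine ⟨C₂ * exp (C₀ * C₂ / μ), by positivity, fun T R _ hR z hz hineq t ht => ?_⟩
  set w := fun s => exp (μ * s) * ‖z s‖
  set b := fun s => C₀ * C₂ * exp (-μ * (T - s))
  set a := fun s => C₂ * R + C₂ * C₃ * exp (μ * (2 * s - T))
  have hgronwall : w t ≤ a t * exp (∫ s in 0..t, b s) :=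
    le_mul_exp_integral_of_le_add_integral (by fun_prop) (fun s _ => by positivity)
      (by fun_prop) (fun x _ y _ hxy => by gcongr)
      (fun s hs => exp_mul_norm_le_add_integral (hineq s hs)) ht
  have hmass : ∫ s in 0..t, b s ≤ C₀ * C₂ / μ := by
    rw [integral_const_mul, div_eq_mul_inv]
    exact mul_le_mul_of_nonneg_left (integral_exp_neg_mul_sub_le_inv hμ ht.2) (by positivity)
  calc ‖z t‖ = exp (-μ * t) * w t := by
        rw [← mul_assoc, exp_mul_exp_of_add_eq (x' := 0) (by ring), exp_zero, one_mul]
    _ ≤ exp (-μ * t) * (a t * exp (C₀ * C₂ / μ)) := by grw [hgronwall, hmass]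
    _ = C₂ * exp (C₀ * C₂ / μ) * (R * exp (-μ * t) + C₃ * exp (-μ * (T - t))) := by
        linear_combination C₂ * C₃ * exp (C₀ * C₂ / μ) *
          exp_mul_exp_of_add_eq (x := -μ * t) (y := μ * (2 * t - T)) (x' := -μ * (T - t))
            (by ring)

/-- the forward integral inequality satisfied by `z = y − ȳ` in the
proof of the main turnpike theorem implies a turnpike bound with a constant `C₄`
depending only on `C₀, C₂, C₃, μ` (in particular independent of `T` and `R`). -/
theorem turnpike_closing_estimate
    {H : Type*} [NormedAddCommGroup H] [NormedSpace ℝ H]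
    (μ C₀ C₂ C₃ : ℝ) (hμ : 0 < μ) (hC₂ : 1 ≤ C₂) (hC₀ : 0 ≤ C₀) (hC₃ : 0 ≤ C₃) :
    ∃ C₄ : ℝ, 0 < C₄ ∧
      ∀ (T R : ℝ), 0 ≤ T → 0 ≤ R →
      ∀ z : ℝ → H, ContinuousOn z (Set.Icc 0 T) →
      (∀ t ∈ Set.Icc (0 : ℝ) T,
        ‖z t‖ ≤ C₂ * R * Real.exp (-μ * t) + C₂ * C₃ * Real.exp (-μ * (T - t)) +
          C₀ * C₂ * ∫ s in (0 : ℝ)..t,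
            Real.exp (-μ * (t - s)) * Real.exp (-μ * (T - s)) * ‖z s‖) →
      ∀ t ∈ Set.Icc (0 : ℝ) T,
        ‖z t‖ ≤ C₄ * (R * Real.exp (-μ * t) + C₃ * Real.exp (-μ * (T - t))) :=
  turnpike_closing_estimate_general μ C₀ C₂ C₃ hμ hC₂ hC₀ hC₃
end
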